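/- arXiv:2308.13252 — 2 statements merged into one kernel-verified Lean document; each statement's English description precedes it below -/
import Mathlib

section
/- In ℝ², there exist exactly 6 unit vectors with pairwise inner products at most 1/2, and no 7 such vectors exist; i.e., the kissing number κ(2) = 6. -/
open Matrix

def KissingConfig {n m : ℕ} (V : Matrix (Fin n) (Fin m) ℝ) : Prop :=
  (∀ i, V i ⬝ᵥ V i = 1) ∧ ∀ i j, i ≠ j → V i ⬝ᵥ V j ≤ 1/2

open Real

/-! Parametrize the unit vectors by angles in `(-π, π]`. Among seven angles, two fall into the
same one of the six intervals of length `π / 3` partitioning `(-π, π]`, and the cosine of their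
difference, which is the inner product of the two vectors, then exceeds `1 / 2`. -/

noncomputable def hexagon : Matrix (Fin 6) (Fin 2) ℝ :=
  !![1, 0; 1/2, √3/2; -1/2, √3/2; -1, 0; -1/2, -√3/2; 1/2, -√3/2]

theorem kissingConfig_hexagon : KissingConfig hexagon := by
  have h3 : √3 ^ 2 = 3 := sq_sqrt (by norm_num)
  refine ⟨fun i => ?_, fun i j hij => ?_⟩
  · fin_cases i <;> simp [hexagon, vec2_dotProduct] <;> nlinarith
  · fin_cases i <;> fin_cases j <;> simp [hexagon, vec2_dotProduct] at hij ⊢ <;> nlinarith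

theorem exists_ne_abs_sub_lt_of_mem_Ioc {n : ℕ} {a δ : ℝ} (hδ : 0 < δ) (θ : Fin (n + 1) → ℝ)
    (hθ : ∀ i, θ i ∈ Set.Ioc a (a + n * δ)) : ∃ i j, i ≠ j ∧ |θ i - θ j| < δ := by
  have hbox : ∀ i, ⌈(θ i - a) / δ⌉ ∈ Finset.Icc (1 : ℤ) n := fun i => by
    obtain ⟨hlo, hhi⟩ := hθ i
    refine Finset.mem_Icc.2 ⟨Int.one_le_ceil_iff.2 (div_pos (by linarith) hδ), Int.ceil_le.2 ?_⟩
    rw [div_le_iff₀ hδ]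
    push_cast
    linarith
  obtain ⟨i, -, j, -, hij, hceil⟩ := Finset.exists_ne_map_eq_of_card_lt_of_maps_to
    (s := Finset.univ) (by simp) (fun i _ => hbox i)
  refine ⟨i, j, hij, ?_⟩
  obtain ⟨hi₁, hi₂⟩ := Int.ceil_eq_iff.1 (rfl : ⌈(θ i - a) / δ⌉ = _)
  obtain ⟨hj₁, hj₂⟩ := Int.ceil_eq_iff.1 hceil.symm
  have hdiv : |(θ i - a) / δ - (θ j - a) / δ| < 1 := abs_sub_lt_iff.2 ⟨by linarith, by linarith⟩
  rwa [← sub_div, abs_div, abs_of_pos hδ, div_lt_one hδ, sub_sub_sub_cancel_right] at hdiv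

theorem exists_cos_sin_eq_of_dotProduct_self_eq_one {v : Fin 2 → ℝ} (hv : v ⬝ᵥ v = 1) :
    ∃ θ ∈ Set.Ioc (-π) π, cos θ = v 0 ∧ sin θ = v 1 := by
  set z : ℂ := ⟨v 0, v 1⟩
  have hz : ‖z‖ = 1 := by
    rw [Complex.norm_def, Complex.normSq_mk, ← vec2_dotProduct, hv, sqrt_one]
  refine ⟨z.arg, ⟨Complex.neg_pi_lt_arg z, Complex.arg_le_pi z⟩, ?_, ?_⟩
  · rw [Complex.cos_arg (norm_ne_zero_iff.1 (hz ▸ one_ne_zero)), hz, div_one]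
  · rw [Complex.sin_arg, hz, div_one]

theorem one_half_lt_cos_of_abs_lt {x : ℝ} (hx : |x| < π / 3) : 1 / 2 < cos x := by
  rw [← cos_abs, ← cos_pi_div_three]
  exact cos_lt_cos_of_nonneg_of_le_pi (abs_nonneg x) (by linarith [pi_pos]) hx

theorem not_kissingConfig_seven (V : Matrix (Fin 7) (Fin 2) ℝ) : ¬ KissingConfig V := by
  rintro ⟨hunit, hpair⟩
  choose θ hθ hcos hsin using fun i => exists_cos_sin_eq_of_dotProduct_self_eq_one (hunit i)
  obtain ⟨i, j, hij, hclose⟩ :=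
    exists_ne_abs_sub_lt_of_mem_Ioc (n := 6) (a := -π) (δ := π / 3) (by positivity) θ fun i => by
      convert hθ i using 2; ring
  have hdot : V i ⬝ᵥ V j = cos (θ i - θ j) := by
    rw [cos_sub, hcos, hcos, hsin, hsin, vec2_dotProduct]
  linarith [hpair i j hij, one_half_lt_cos_of_abs_lt hclose]

theorem stmt5 :
    (∃ V : Matrix (Fin 6) (Fin 2) ℝ, KissingConfig V) ∧
      ¬ (∃ V : Matrix (Fin 7) (Fin 2) ℝ, KissingConfig V) :=
  ⟨⟨hexagon, kissingConfig_hexagon⟩, fun ⟨V, hV⟩ => not_kissingConfig_seven V hV⟩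
end

section
/- If P ∈ ℝ^{n×n} is a permutation matrix and P = σ(2VWᵀ − 1) entrywise for some V, W ∈ ℝ^{n×m} with unit-norm rows, then m cannot be 1 when n ≥ 3. -/
open Matrix

def IsPermMatrix {n : ℕ} (P : Matrix (Fin n) (Fin n) ℝ) : Prop :=
  (∀ i j, P i j = 0 ∨ P i j = 1) ∧ (∀ i, ∑ j, P i j = 1) ∧ (∀ j, ∑ i, P i j = 1)

theorem stmt9 {n : ℕ} (hn : 3 ≤ n) (P : Matrix (Fin n) (Fin n) ℝ)
    (hP : IsPermMatrix P) (V W : Matrix (Fin n) (Fin 1) ℝ)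
    (hV : ∀ i, V i ⬝ᵥ V i = 1) (hW : ∀ i, W i ⬝ᵥ W i = 1)
    (h : ∀ i j, P i j = max (2 * (V i ⬝ᵥ W j) - 1) 0) : False := by
  obtain ⟨hP01, hrow, hcol⟩ := hP
  -- values of V and W are ±1
  have hVpm : ∀ i, V i 0 = 1 ∨ V i 0 = -1 := by
    intro i
    have := hV i
    simp [dotProduct, Fin.sum_univ_one] at this
    exact mul_self_eq_one_iff.mp this
  have hWpm : ∀ i, W i 0 = 1 ∨ W i 0 = -1 := by
    intro i
    have := hW i
    simp [dotProduct, Fin.sum_univ_one] at this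
    exact mul_self_eq_one_iff.mp this
  have hdot : ∀ i j, V i ⬝ᵥ W j = V i 0 * W j 0 := by
    intro i j; simp [dotProduct, Fin.sum_univ_one]
  -- P i j = 1 iff V i 0 = W j 0, else 0
  have hPval1 : ∀ i j, V i 0 = W j 0 → P i j = 1 := by
    intro i j hij
    have := h i j
    rw [hdot, hij] at this
    rcases hWpm j with hw | hw <;> rw [hw] at this <;> norm_num at this <;>
      exact this
  have hPval0 : ∀ i j, V i 0 ≠ W j 0 → P i j = 0 := by
    intro i j hij
    have := h i j
    rw [hdot] at this
    rcases hVpm i with hv | hv <;> rcases hWpm j with hw | hw <;>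
      rw [hv, hw] at this hij <;> first
        | (exact absurd rfl hij)
        | (norm_num at this; exact this)
  -- find two columns with equal W value
  have h0 : (0 : ℕ) < n := by omega
  have h1 : (1 : ℕ) < n := by omega
  have h2 : (2 : ℕ) < n := by omega
  obtain ⟨j1, j2, hne, heq⟩ :
      ∃ j1 j2 : Fin n, j1 ≠ j2 ∧ W j1 0 = W j2 0 := by
    set a := (⟨0, h0⟩ : Fin n)
    set b := (⟨1, h1⟩ : Fin n)
    set c := (⟨2, h2⟩ : Fin n)
    have hab : a ≠ b := by simp [a, b, Fin.ext_iff]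
    have hac : a ≠ c := by simp [a, c, Fin.ext_iff]
    have hbc : b ≠ c := by simp [b, c, Fin.ext_iff]
    rcases hWpm a with ha | ha <;> rcases hWpm b with hb | hb <;>
      rcases hWpm c with hc | hc
    · exact ⟨a, b, hab, by rw [ha, hb]⟩
    · exact ⟨a, b, hab, by rw [ha, hb]⟩
    · exact ⟨a, c, hac, by rw [ha, hc]⟩
    · exact ⟨b, c, hbc, by rw [hb, hc]⟩
    · exact ⟨b, c, hbc, by rw [hb, hc]⟩
    · exact ⟨a, c, hac, by rw [ha, hc]⟩
    · exact ⟨a, b, hab, by rw [ha, hb]⟩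
    · exact ⟨a, b, hab, by rw [ha, hb]⟩
  -- no row can match the repeated column value
  have hno : ∀ i, V i 0 ≠ W j1 0 := by
    intro i hi
    have hP1 : P i j1 = 1 := hPval1 i j1 hi
    have hP2 : P i j2 = 1 := hPval1 i j2 (by rw [hi, heq])
    have hnn : ∀ j, 0 ≤ P i j := by
      intro j; rw [h i j]; exact le_max_right _ _
    have hsub : ({j1, j2} : Finset (Fin n)) ⊆ Finset.univ := Finset.subset_univ _
    have hle : ∑ j ∈ ({j1, j2} : Finset (Fin n)), P i j ≤ ∑ j, P i j :=
      Finset.sum_le_sum_of_subset_of_nonneg hsub (fun j _ _ => hnn j)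
    rw [Finset.sum_pair hne, hP1, hP2, hrow i] at hle
    norm_num at hle
  -- column j1 sums to 0
  have : ∑ i, P i j1 = 0 := by
    apply Finset.sum_eq_zero
    intro i _
    exact hPval0 i j1 (hno i)
  rw [hcol j1] at this
  norm_num at this
end
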